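/- Let I be a square-free monomial ideal of R = k[x_1,...,x_d]. Then I^n = I^{(n)} for all positive integers n if and only if x_1⋯x_d · I^{2n+1} ⊆ (I^{n+1})^{[2]} for every n with n < μ(I)/2, where (I^{n+1})^{[2]} is the ideal generated by the squares of the monomial generators of I^{n+1}. -/

import Mathlib

open MvPolynomial

/-- For a monomial ideal `J`, the bracket power `J^{[2]}` (generated by the squares of
the monomial generators of `J`) is the extension of `J` along the `k`-algebra map
`x_i ↦ x_i^2`. -/
noncomputable def bracketTwo (k : Type*) [Field k] (d : ℕ)
    (J : Ideal (MvPolynomial (Fin d) k)) : Ideal (MvPolynomial (Fin d) k) :=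
  Ideal.map (MvPolynomial.aeval (R := k) fun i : Fin d => X i ^ 2).toRingHom J

/-!
In exponent language, `x^c ∈ I^n` iff `c` dominates a sum of `n` generators of `I`, and
`x^c ∈ I^{(n)}` iff `∑_{i ∈ F_j} c_i ≥ n` for every minimal prime `Q_j = (x_i : i ∈ F_j)`.

If `I^n = I^{(n)}` for all `n`, rounding `b/2` up sends `x^b ∈ I^{(2n+1)}` into
`I^{(n+1)} = I^{n+1}`, which is Fedder's condition. Conversely, Fedder's condition for
`2n < μ(I)` propagates to all `n`, since a sum of more than `μ(I)` generators repeats one.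
Then for `x^c ∈ I^{(n+1)}` choose a generator `g ≤ c`; as `g` is squarefree, induction applied
to `c - e_i` for `i ∈ supp g` yields a sum of `|g| n + 1` generators below `|g| c`. Padding with
a sum of `n` generators below `c` reaches `2^{|g|} n + 1` generators below `2^{|g|} c`, and `|g|`
applications of Fedder's condition halve this back to `n + 1` generators below `c`.
-/

open scoped Pointwise

namespace Set

variable {ι M : Type*} [AddCommMonoid M]

theorem finsetSum_mem_card_nsmul {A : Set M} (t : Finset ι) (f : ι → M)
    (hf : ∀ i ∈ t, f i ∈ A) : ∑ i ∈ t, f i ∈ t.card • A := by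
  simpa using finsetSum_mem_finsetSum t (fun _ ↦ A) f hf

theorem exists_eq_add_add_of_card_lt {G : Finset M} {m : ℕ} {b : M}
    (hb : b ∈ (m + 2) • (G : Set M)) (hG : G.card < m + 2) :
    ∃ g ∈ G, ∃ b' ∈ m • (G : Set M), b = g + g + b' := by
  classical
  obtain ⟨f, rfl⟩ := mem_nsmul.mp hb
  obtain ⟨x, y, hxy, hfxy⟩ := Fintype.exists_ne_map_eq_of_card_lt f (by simpa using hG)
  have hy : y ∈ Finset.univ.erase x := Finset.mem_erase.mpr ⟨hxy.symm, Finset.mem_univ y⟩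
  refine ⟨f x, (f x).2, ∑ i ∈ (Finset.univ.erase x).erase y, (f i : M), ?_, ?_⟩
  · convert finsetSum_mem_card_nsmul _ _ fun i _ ↦ (f i).2
    rw [Finset.card_erase_of_mem hy, Finset.card_erase_of_mem (Finset.mem_univ x)]
    simp
  · rw [List.sum_ofFn, ← Finset.add_sum_erase _ _ (Finset.mem_univ x),
      ← Finset.add_sum_erase _ _ hy, hfxy, add_assoc]

end Set

namespace Finsupp

variable {σ : Type*}

theorem exists_le_degree_eq_support_subset_iff {s : Finset σ} {n : ℕ} {c : σ →₀ ℕ} :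
    (∃ b ≤ c, b.degree = n ∧ ↑b.support ⊆ (s : Set σ)) ↔ n ≤ ∑ i ∈ s, c i := by
  classical
  constructor
  · rintro ⟨b, hbc, rfl, hbs⟩
    calc b.degree = ∑ i ∈ s, b i :=
          Finset.sum_subset (Finset.coe_subset.mp hbs) fun i _ hi ↦ notMem_support_iff.mp hi
      _ ≤ ∑ i ∈ s, c i := Finset.sum_le_sum fun i _ ↦ hbc i
  · intro hn
    have hdeg : (c.filter (· ∈ s)).degree = ∑ i ∈ s, c i := by
      simp only [degree_apply, support_filter, filter_apply, Finset.sum_ite_mem]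
      exact Finset.sum_subset Finset.inter_subset_right fun i _ hi ↦ by simp_all
    obtain ⟨b, hb, hdegb⟩ := (c.filter (· ∈ s)).exists_le_degree_eq n (hdeg ▸ hn)
    refine ⟨b, hb.trans fun i ↦ ?_, hdegb, fun i hi ↦ ?_⟩
    · rw [filter_apply]
      split_ifs <;> simp
    · have hi := support_mono hb hi
      rw [support_filter, Finset.mem_filter] at hi
      exact hi.2

theorem le_sum_tsub_single {s : Finset σ} {n : ℕ} {c : σ →₀ ℕ} {i : σ}
    (hc : n + 1 ≤ ∑ l ∈ s, c l) (hi : single i 1 ≤ c) :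
    n ≤ ∑ l ∈ s, (c - single i 1 : σ →₀ ℕ) l := by
  classical
  have hsingle : ∑ l ∈ s, single i 1 l ≤ 1 := by
    simp only [single_apply, Finset.sum_ite_eq]
    split_ifs <;> simp
  have hsplit :
      ∑ l ∈ s, c l = ∑ l ∈ s, (c - single i 1 : σ →₀ ℕ) l + ∑ l ∈ s, single i 1 l := by
    rw [← Finset.sum_add_distrib]
    exact Finset.sum_congr rfl fun l _ ↦ by rw [← add_apply, tsub_add_cancel_of_le hi]
  omega

theorem eq_sum_single_one_of_le_one {g : σ →₀ ℕ} (hg : ∀ i, g i ≤ 1) :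
    g = ∑ i ∈ g.support, single i 1 := by
  conv_lhs => rw [← g.sum_single]
  refine Finset.sum_congr rfl fun i hi ↦ ?_
  rw [show g i = 1 by have := mem_support_iff.mp hi; have := hg i; omega]

end Finsupp

section Exponents

open Finsupp

variable {σ ι : Type*}

/-- The Fedder condition at level `t` for the monomial ideal `I` with generator exponents `G`:
`x_1 ⋯ x_d · x^b ∈ (I^{t+1})^{[2]}` for every generator `x^b` of `I^{2t+1}`, i.e. `x^{2m}`
divides `x_1 ⋯ x_d · x^b` for some generator `x^m` of `I^{t+1}`. -/
def FedderAt (G : Set (σ →₀ ℕ)) (t : ℕ) : Prop :=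
  ∀ b ∈ (2 * t + 1) • G, ∃ m ∈ (t + 1) • G, ∀ i, 2 * m i ≤ b i + 1

theorem fedderAt_of_two_mul_lt_card {G : Finset (σ →₀ ℕ)}
    (h : ∀ t, 2 * t < G.card → FedderAt (G : Set (σ →₀ ℕ)) t) (t : ℕ) :
    FedderAt (G : Set (σ →₀ ℕ)) t := by
  induction t using Nat.strong_induction_on with | _ t ih => ?_
  by_cases ht : 2 * t < G.card
  · exact h t ht
  intro b hb
  obtain _ | t := t
  · obtain rfl : G = ∅ := Finset.card_eq_zero.mp (by omega)
    simp at hb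
  obtain ⟨g, hg, b', hb', rfl⟩ :=
    Set.exists_eq_add_add_of_card_lt (m := 2 * t + 1) (by convert hb using 2; ring) (by omega)
  obtain ⟨m, hm, hmb⟩ := ih t (by omega) b' hb'
  refine ⟨g + m, ?_, fun i ↦ ?_⟩
  · rw [succ_nsmul']
    exact Set.add_mem_add hg hm
  · simp only [Finsupp.coe_add, Pi.add_apply]
    have := hmb i
    omega

/-- Each application of the Fedder condition halves both the multiplier `2 ^ k` and the
excess `2 ^ k * n` of the number of generators over `n`. -/
theorem exists_le_of_le_two_pow_nsmul {G : Set (σ →₀ ℕ)} (hG : ∀ t, FedderAt G t) {n : ℕ} :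
    ∀ (k : ℕ) {b c : σ →₀ ℕ}, b ∈ (2 ^ k * n + 1) • G → b ≤ 2 ^ k • c →
      ∃ m ∈ (n + 1) • G, m ≤ c
  | 0, b, c, hb, hbc => ⟨b, by simpa using hb, by simpa using hbc⟩
  | k + 1, b, c, hb, hbc => by
    obtain ⟨m, hm, hmb⟩ := hG (2 ^ k * n) b (by convert hb using 2; ring)
    refine exists_le_of_le_two_pow_nsmul hG k hm fun i ↦ ?_
    have h1 := hmb i
    have h2 := hbc i
    simp only [Finsupp.smul_apply, smul_eq_mul, pow_succ] at h2 ⊢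
    nlinarith

theorem fedderAt_of_pow_eq_symbolic {G : Set (σ →₀ ℕ)} {F : ι → Finset σ}
    (hGF : ∀ n c, (∃ b ∈ n • G, b ≤ c) ↔ ∀ j, n ≤ ∑ i ∈ F j, c i) (t : ℕ) : FedderAt G t := by
  intro b hb
  let c : σ →₀ ℕ := mapRange (fun e ↦ (e + 1) / 2) rfl b
  have hc : ∀ j, t + 1 ≤ ∑ i ∈ F j, c i := fun j ↦ by
    have hb := (hGF _ b).mp ⟨b, hb, le_rfl⟩ j
    have : ∑ i ∈ F j, b i ≤ 2 * ∑ i ∈ F j, c i := by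
      rw [Finset.mul_sum]
      exact Finset.sum_le_sum fun i _ ↦ by simp only [c, mapRange_apply]; omega
    omega
  obtain ⟨m, hm, hmc⟩ := (hGF _ c).mpr hc
  refine ⟨m, hm, fun i ↦ ?_⟩
  have := hmc i
  simp only [c, mapRange_apply] at this
  omega

theorem exists_mem_nsmul_le_card_nsmul {G : Set (σ →₀ ℕ)} {n : ℕ} {c g : σ →₀ ℕ}
    (hg : g ∈ G) (hg1 : ∀ i, g i ≤ 1) (h : ∀ i ∈ g.support, ∃ b ∈ n • G, b + single i 1 ≤ c) :
    ∃ W ∈ (g.support.card * n + 1) • G, W ≤ g.support.card • c := by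
  choose! b hb hbc using h
  refine ⟨∑ i ∈ g.support, b i + g, ?_, ?_⟩
  · rw [succ_nsmul, mul_nsmul']
    exact Set.add_mem_add (Set.finsetSum_mem_card_nsmul _ _ hb) hg
  · calc ∑ i ∈ g.support, b i + g = ∑ i ∈ g.support, (b i + single i 1) := by
          rw [Finset.sum_add_distrib, ← eq_sum_single_one_of_le_one hg1]
      _ ≤ ∑ _i ∈ g.support, c := Finset.sum_le_sum hbc
      _ = g.support.card • c := Finset.sum_const c

theorem exists_mem_nsmul_le_of_fedderAt {G : Set (σ →₀ ℕ)} {F : ι → Finset σ}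
    (hsf : ∀ a ∈ G, ∀ i, a i ≤ 1)
    (hcover : ∀ c : σ →₀ ℕ, (∀ j, 1 ≤ ∑ i ∈ F j, c i) → ∃ g ∈ G, g ≤ c)
    (hG : ∀ t, FedderAt G t) (n : ℕ) {c : σ →₀ ℕ} (hc : ∀ j, n ≤ ∑ i ∈ F j, c i) :
    ∃ b ∈ n • G, b ≤ c := by
  induction n generalizing c with
  | zero => exact ⟨0, by simp, zero_le⟩
  | succ n ih =>
    obtain ⟨g, hg, hgc⟩ := hcover c fun j ↦ le_trans (by omega) (hc j)
    have hstep : ∀ i ∈ g.support, ∃ b ∈ n • G, b + single i 1 ≤ c := fun i hi ↦ by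
      have hi : single i 1 ≤ c :=
        single_le_iff.mpr ((Nat.one_le_iff_ne_zero.mpr (mem_support_iff.mp hi)).trans (hgc i))
      obtain ⟨b, hb, hbc⟩ := ih fun j ↦ le_sum_tsub_single (hc j) hi
      exact ⟨b, hb, (le_tsub_iff_right hi).mp hbc⟩
    obtain ⟨W, hW, hWc⟩ := exists_mem_nsmul_le_card_nsmul hg (hsf g hg) hstep
    obtain ⟨b₀, hb₀, hb₀c⟩ := ih fun j ↦ le_trans (by omega) (hc j)
    -- pad `W` with copies of `b₀` to reach a power-of-two multiple of `c`
    obtain ⟨r, hr⟩ := Nat.exists_eq_add_of_le (Nat.lt_two_pow_self (n := g.support.card)).le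
    refine exists_le_of_le_two_pow_nsmul hG g.support.card (b := W + r • b₀) ?_ ?_
    · rw [hr, add_mul, add_right_comm, add_nsmul, mul_nsmul']
      exact Set.add_mem_add hW (Set.nsmul_mem_nsmul hb₀)
    · rw [hr, add_nsmul]
      exact add_le_add hWc (nsmul_le_nsmul_right hb₀c r)

end Exponents

section MonomialIdeals

variable {k σ : Type*}

section CommSemiring

variable [CommSemiring k]

theorem span_monomial_image_pow (A : Set (σ →₀ ℕ)) (n : ℕ) :
    Ideal.span ((monomial · (1 : k)) '' A) ^ n = Ideal.span ((monomial · (1 : k)) '' (n • A)) := by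
  induction n with
  | zero => simp
  | succ n ih =>
    rw [pow_succ, ih, Ideal.span_mul_span', succ_nsmul]
    congr 1
    ext f
    simp only [Set.mem_mul, Set.mem_add, Set.mem_image]
    constructor
    · rintro ⟨_, ⟨a, ha, rfl⟩, _, ⟨b, hb, rfl⟩, rfl⟩
      exact ⟨a + b, ⟨a, ha, b, hb, rfl⟩, by rw [monomial_mul, one_mul]⟩
    · rintro ⟨_, ⟨a, ha, b, hb, rfl⟩, rfl⟩
      exact ⟨_, ⟨a, ha, rfl⟩, _, ⟨b, hb, rfl⟩, by rw [monomial_mul, one_mul]⟩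

theorem mem_span_X_image_pow_iff {s : Finset σ} {n : ℕ} {f : MvPolynomial σ k} :
    f ∈ Ideal.span (X '' (s : Set σ)) ^ n ↔ ∀ c ∈ f.support, n ≤ ∑ i ∈ s, c i := by
  have hX : X '' (s : Set σ) = (monomial · (1 : k)) '' ((Finsupp.single · 1) '' s) := by
    rw [Set.image_image]
    rfl
  rw [hX, span_monomial_image_pow, Finsupp.nsmul_single_one_image, mem_ideal_span_monomial_image]
  refine forall₂_congr fun c _ ↦ ?_
  rw [← Finsupp.exists_le_degree_eq_support_subset_iff]
  exact ⟨fun ⟨b, hb, hbc⟩ ↦ ⟨b, hbc, hb⟩, fun ⟨b, hbc, hb⟩ ↦ ⟨b, hb, hbc⟩⟩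

theorem mem_iInf_span_X_image_pow_iff {ι : Type*} {F : ι → Finset σ} {n : ℕ}
    {f : MvPolynomial σ k} :
    f ∈ ⨅ j, Ideal.span (X '' (F j : Set σ)) ^ n ↔ ∀ c ∈ f.support, ∀ j, n ≤ ∑ i ∈ F j, c i := by
  simp only [Submodule.mem_iInf, mem_span_X_image_pow_iff]
  exact ⟨fun h c hc j ↦ h j c hc, fun h j c hc ↦ h c hc j⟩

theorem monomial_one_mem_iff_of_forall_mem_iff [Nontrivial k] {J : Ideal (MvPolynomial σ k)}
    {P : (σ →₀ ℕ) → Prop} (hJ : ∀ f, f ∈ J ↔ ∀ c ∈ f.support, P c) (c : σ →₀ ℕ) :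
    monomial c (1 : k) ∈ J ↔ P c := by
  classical
  simp [hJ, support_monomial]

end CommSemiring

variable [Field k] {d : ℕ}

theorem bracketTwo_span_monomial_image (A : Set (Fin d →₀ ℕ)) :
    bracketTwo k d (Ideal.span ((monomial · (1 : k)) '' A)) =
      Ideal.span ((monomial · (1 : k)) '' ((2 • ·) '' A)) := by
  rw [bracketTwo, Ideal.map_span, Set.image_image, Set.image_image]
  congr 1
  exact Set.image_congr fun a _ ↦ expand_monomial 2 a 1

theorem prod_X_mul_mem_bracketTwo_iff {G : Set (Fin d →₀ ℕ)} {t : ℕ} :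
    (∀ f ∈ Ideal.span ((monomial · (1 : k)) '' G) ^ (2 * t + 1),
      (∏ i, X i) * f ∈ bracketTwo k d (Ideal.span ((monomial · (1 : k)) '' G) ^ (t + 1))) ↔
      FedderAt G t := by
  have hprod : ∀ b : Fin d →₀ ℕ, (∏ i, X i) * monomial b (1 : k) ∈
        Ideal.span ((monomial · (1 : k)) '' ((2 • ·) '' ((t + 1) • G))) ↔
        ∃ m ∈ (t + 1) • G, ∀ i, 2 * m i ≤ b i + 1 := fun b ↦ by
    have hX : (∏ i, X i : MvPolynomial (Fin d) k) = monomial (∑ i, Finsupp.single i 1) 1 :=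
      (monomial_sum_one _ _).symm
    rw [hX, monomial_mul, one_mul,
      monomial_one_mem_iff_of_forall_mem_iff (fun _ ↦ mem_ideal_span_monomial_image),
      Set.exists_mem_image]
    refine exists_congr fun m ↦ and_congr_right fun _ ↦ ?_
    simp [Finsupp.le_def, Finsupp.single_apply, add_comm]
  simp only [span_monomial_image_pow, bracketTwo_span_monomial_image]
  constructor
  · intro h b hb
    exact (hprod b).mp (h _ (Ideal.subset_span ⟨b, hb, rfl⟩))
  · intro h f hf
    suffices Ideal.span ((monomial · (1 : k)) '' ((2 * t + 1) • G)) ≤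
        (Ideal.span ((monomial · (1 : k)) '' ((2 • ·) '' ((t + 1) • G)))).colon {∏ i, X i} by
      simpa [mul_comm] using Submodule.mem_colon_singleton.mp (this hf)
    rw [Ideal.span_le]
    rintro _ ⟨b, hb, rfl⟩
    rw [SetLike.mem_coe, Submodule.mem_colon_singleton, smul_eq_mul, mul_comm]
    exact (hprod b).mpr (h b hb)

end MonomialIdeals

theorem ordinary_eq_symbolic_iff_fedder_general (k : Type*) [Field k] (d s : ℕ)
    (F : Fin s → Finset (Fin d))
    (Q : Fin s → Ideal (MvPolynomial (Fin d) k))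
    (hQ : ∀ j, Q j = Ideal.span (X '' (F j : Set (Fin d))))
    (I : Ideal (MvPolynomial (Fin d) k)) (hI : I = ⨅ j, Q j)
    (G : Finset (Fin d →₀ ℕ))
    (hG : I = Ideal.span ((fun a => monomial a (1 : k)) '' (G : Set (Fin d →₀ ℕ))))
    (hsf : ∀ a ∈ G, ∀ i, a i ≤ 1) :
    (∀ n : ℕ, 1 ≤ n → I ^ n = ⨅ j, Q j ^ n) ↔
      (∀ n : ℕ, 2 * n < G.card →
        ∀ f ∈ I ^ (2 * n + 1),
          (∏ i : Fin d, X i) * f ∈ bracketTwo k d (I ^ (n + 1))) := by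
  have hpow (n : ℕ) f : f ∈ I ^ n ↔ ∀ c ∈ f.support, ∃ b ∈ n • (G : Set (Fin d →₀ ℕ)), b ≤ c := by
    rw [hG, span_monomial_image_pow, mem_ideal_span_monomial_image]
  have hsymb (n : ℕ) f : f ∈ ⨅ j, Q j ^ n ↔ ∀ c ∈ f.support, ∀ j, n ≤ ∑ i ∈ F j, c i := by
    simp only [hQ, mem_iInf_span_X_image_pow_iff]
  have hpow_monomial := fun n ↦ monomial_one_mem_iff_of_forall_mem_iff (hpow n)
  have hsymb_monomial := fun n ↦ monomial_one_mem_iff_of_forall_mem_iff (hsymb n)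
  have hle (n : ℕ) : I ^ n ≤ ⨅ j, Q j ^ n :=
    le_iInf fun j ↦ Ideal.pow_right_mono (hI ▸ iInf_le _ j) n
  have hcover (c : Fin d →₀ ℕ) (hc : ∀ j, 1 ≤ ∑ i ∈ F j, c i) : ∃ g ∈ G, g ≤ c := by
    have hcI : monomial c (1 : k) ∈ I ^ 1 := by
      simpa [hI] using (hsymb_monomial 1 c).mpr hc
    simpa using (hpow_monomial 1 c).mp hcI
  conv_rhs => simp only [hG, prod_X_mul_mem_bracketTwo_iff]
  constructor
  · intro h t _
    refine fedderAt_of_pow_eq_symbolic (F := F) (fun n c ↦ ⟨fun hc ↦ ?_, fun hc ↦ ?_⟩) t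
    · exact (hsymb_monomial n c).mp (hle n ((hpow_monomial n c).mpr hc))
    · rcases n with _ | n
      · exact ⟨0, by simp, zero_le⟩
      · exact (hpow_monomial _ c).mp (h (n + 1) (by omega) ▸ (hsymb_monomial _ c).mpr hc)
  · intro h n _
    refine le_antisymm (hle n) fun f hf ↦ (hpow n f).mpr fun c hc ↦ ?_
    exact exists_mem_nsmul_le_of_fedderAt hsf hcover (fedderAt_of_two_mul_lt_card h) n
      ((hsymb n f).mp hf c hc)

/-- let `I` be a square-free monomial ideal of `R = k[x_1,…,x_d]` with
minimal primes `Q_1,…,Q_s`, symbolic powers `I^{(n)} = ⋂_j Q_j^n`, and minimal monomial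
generating set `{x^a : a ∈ G}` (so `μ(I) = |G|`). Then `I^n = I^{(n)}` for all `n ≥ 1`
if and only if `x_1 ⋯ x_d · I^{2n+1} ⊆ (I^{n+1})^{[2]}` for every `n < μ(I)/2`. -/
theorem ordinary_eq_symbolic_iff_fedder (k : Type*) [Field k] (d s : ℕ)
    (F : Fin s → Finset (Fin d))
    (Q : Fin s → Ideal (MvPolynomial (Fin d) k))
    (hQ : ∀ j, Q j = Ideal.span (X '' (F j : Set (Fin d))))
    (I : Ideal (MvPolynomial (Fin d) k)) (hI : I = ⨅ j, Q j)
    (hmin : I.minimalPrimes = Set.range Q)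
    (G : Finset (Fin d →₀ ℕ))
    (hG : I = Ideal.span ((fun a => monomial a (1 : k)) '' (G : Set (Fin d →₀ ℕ))))
    (hsf : ∀ a ∈ G, ∀ i, a i ≤ 1)
    (hGmin : ∀ a ∈ G, ∀ b ∈ G, a ≤ b → a = b) :
    (∀ n : ℕ, 1 ≤ n → I ^ n = ⨅ j, Q j ^ n) ↔
      (∀ n : ℕ, 2 * n < G.card →
        ∀ f ∈ I ^ (2 * n + 1),
          (∏ i : Fin d, X i) * f ∈ bracketTwo k d (I ^ (n + 1))) :=
  ordinary_eq_symbolic_iff_fedder_general k d s F Q hQ I hI G hG hsf
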